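/- arXiv:1603.07471 — 4 statements merged into one kernel-verified Lean document; each statement's English description precedes it below -/
import Mathlib

section
/- Let p be an odd prime, q = p^h, and n ≥ 3. The orbits of the group M on 𝔽_q^n are exactly the four sets {0}, S_0, S_+, and S_−. Equivalently: each of S_0, S_+, S_− is invariant under every map x ↦ a·x·A with a ∈ 𝔽_q^×, A·Aᵀ = I, and for any two nonzero points x, y ∈ 𝔽_q^n lying in the same one of the sets S_0, S_+, S_−, there exist a ∈ 𝔽_q^× and A ∈ GL(n,q) with A·Aᵀ = I such that y = a·x·A. -/
/-!
Since `Q (a • x ᵥ* A) = a ^ 2 * Q x` for orthogonal `A`, the maps of `M` preserve whether `x` is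
zero and the square class of `Q x`. Conversely, two nonzero values of `Q` in the same square class
differ by a factor `a ^ 2`, which the scalar absorbs, so it remains to move `x` to `y` when
`Q x = Q y`. This is Witt's theorem for the form `Q` in odd characteristic: the reflection in
`x - y` or in `x + y` does it unless both are isotropic; then `x` and `y` are isotropic and
orthogonal, and two reflections through an isotropic vector `m` with `x ⬝ᵥ m ≠ 0 ≠ y ⬝ᵥ m`
do it.
-/

open Matrix

section DotProduct

variable {ι R : Type*} [Fintype ι]

lemma sum_sq_eq_dotProduct_self [CommSemiring R] (x : ι → R) : ∑ i, x i ^ 2 = x ⬝ᵥ x := by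
  simp [dotProduct, sq]

lemma ne_zero_of_dotProduct_self_ne_zero [CommSemiring R] {x : ι → R} (hx : x ⬝ᵥ x ≠ 0) :
    x ≠ 0 := by
  rintro rfl
  simp at hx

lemma sub_dotProduct_sub_self [CommRing R] (u v : ι → R) :
    (u - v) ⬝ᵥ (u - v) = u ⬝ᵥ u - 2 * (u ⬝ᵥ v) + v ⬝ᵥ v := by
  simp only [dotProduct_sub, sub_dotProduct, dotProduct_comm v u]
  ring

lemma add_dotProduct_add_self [CommRing R] (u v : ι → R) :
    (u + v) ⬝ᵥ (u + v) = u ⬝ᵥ u + 2 * (u ⬝ᵥ v) + v ⬝ᵥ v := by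
  simp only [dotProduct_add, add_dotProduct, dotProduct_comm v u]
  ring

lemma exists_dotProduct_ne_zero_and_ne_zero [Semiring R] {u v : ι → R} (hu : u ≠ 0)
    (hv : v ≠ 0) : ∃ w, u ⬝ᵥ w ≠ 0 ∧ v ⬝ᵥ w ≠ 0 := by
  classical
  obtain ⟨i, hi⟩ := Function.ne_iff.mp hu
  obtain ⟨j, hj⟩ := Function.ne_iff.mp hv
  have hui : u ⬝ᵥ Pi.single i 1 ≠ 0 := by simpa using hi
  have hvj : v ⬝ᵥ Pi.single j 1 ≠ 0 := by simpa using hj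
  by_cases hvi : v ⬝ᵥ Pi.single i 1 = 0
  · by_cases huj : u ⬝ᵥ Pi.single j 1 = 0
    · exact ⟨Pi.single i 1 + Pi.single j 1, by simpa [dotProduct_add, huj] using hui,
        by simpa [dotProduct_add, hvi] using hvj⟩
    · exact ⟨Pi.single j 1, huj, hvj⟩
  · exact ⟨Pi.single i 1, hui, hvi⟩

variable [Field R] {u v : ι → R}

/-- The isotropic vector is obtained from `w` by adding the multiple of `u` that kills `w ⬝ᵥ w`;
this does not change the pairings with `u` and `v` because `u` is isotropic and `u ⬝ᵥ v = 0`. -/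
lemma exists_isotropic_dotProduct_ne_zero (h2 : (2 : R) ≠ 0) (hu : u ≠ 0) (hv : v ≠ 0)
    (hu0 : u ⬝ᵥ u = 0) (huv : u ⬝ᵥ v = 0) :
    ∃ m, m ⬝ᵥ m = 0 ∧ u ⬝ᵥ m ≠ 0 ∧ v ⬝ᵥ m ≠ 0 := by
  obtain ⟨w, huw, hvw⟩ := exists_dotProduct_ne_zero_and_ne_zero hu hv
  have hvu : v ⬝ᵥ u = 0 := by rw [dotProduct_comm, huv]
  refine ⟨w - ((w ⬝ᵥ w) / (2 * (u ⬝ᵥ w))) • u, ?_, ?_, ?_⟩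
  · simp only [sub_dotProduct_sub_self, dotProduct_smul, smul_dotProduct, smul_eq_mul, hu0,
      dotProduct_comm w u]
    field_simp
    ring
  · simpa [dotProduct_sub, hu0] using huw
  · simpa [dotProduct_sub, hvu] using hvw

end DotProduct

section Reflection

variable {ι F : Type*} [Fintype ι] [DecidableEq ι] [Field F]

noncomputable def dotReflection (w : ι → F) : Matrix ι ι F :=
  1 - (2 / (w ⬝ᵥ w)) • vecMulVec w w

lemma vecMul_dotReflection (x w : ι → F) :
    x ᵥ* dotReflection w = x - (2 / (w ⬝ᵥ w) * (x ⬝ᵥ w)) • w := by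
  rw [dotReflection, vecMul_sub, vecMul_one, vecMul_smul, vecMul_vecMulVec, smul_smul]

lemma dotReflection_mul_transpose {w : ι → F} (hw : w ⬝ᵥ w ≠ 0) :
    dotReflection w * (dotReflection w)ᵀ = 1 := by
  have hP : vecMulVec w w * vecMulVec w w = (w ⬝ᵥ w) • vecMulVec w w := by
    rw [vecMulVec_mul_vecMulVec, vecMulVec_smul]
  have hc : 2 / (w ⬝ᵥ w) * (2 / (w ⬝ᵥ w)) * (w ⬝ᵥ w) = 2 / (w ⬝ᵥ w) + 2 / (w ⬝ᵥ w) := by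
    field_simp
    ring
  rw [dotReflection, transpose_sub, transpose_one, transpose_smul, transpose_vecMulVec, sub_mul,
    mul_sub, mul_sub, one_mul, mul_one, one_mul, smul_mul_smul, hP, smul_smul, hc, add_smul]
  abel

lemma vecMul_dotReflection_sub {u v : ι → F} (huv : u ⬝ᵥ u = v ⬝ᵥ v)
    (h : (u - v) ⬝ᵥ (u - v) ≠ 0) : u ᵥ* dotReflection (u - v) = v := by
  have hhalf : (u - v) ⬝ᵥ (u - v) = 2 * (u ⬝ᵥ (u - v)) := by
    rw [sub_dotProduct_sub_self, dotProduct_sub, ← huv]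
    ring
  have hcoeff : 2 / ((u - v) ⬝ᵥ (u - v)) * (u ⬝ᵥ (u - v)) = 1 := by
    rw [hhalf, div_mul_eq_mul_div, div_self (hhalf ▸ h)]
  rw [vecMul_dotReflection, hcoeff, one_smul, sub_sub_cancel]

end Reflection

section Orthogonal

variable {ι F : Type*} [Fintype ι] [DecidableEq ι] [Field F] {A B : Matrix ι ι F}

lemma vecMul_dotProduct_vecMul_self (hA : A * Aᵀ = 1) (x : ι → F) :
    (x ᵥ* A) ⬝ᵥ (x ᵥ* A) = x ⬝ᵥ x := by
  have := dotProduct_mulVec (x ᵥ* A) Aᵀ x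
  rwa [mulVec_transpose, vecMul_vecMul, hA, vecMul_one] at this

lemma mul_mul_transpose_eq_one (hA : A * Aᵀ = 1) (hB : B * Bᵀ = 1) : A * B * (A * B)ᵀ = 1 := by
  rw [transpose_mul, Matrix.mul_assoc, ← Matrix.mul_assoc B, hB, Matrix.one_mul, hA]

lemma vecMul_ne_zero_of_mul_transpose_eq_one (hA : A * Aᵀ = 1) {x : ι → F}
    (hx : x ≠ 0) : x ᵥ* A ≠ 0 := by
  intro h
  apply hx
  rw [← vecMul_one x, ← hA, ← vecMul_vecMul, h, zero_vecMul]

lemma smul_vecMul_dotProduct_self (hA : A * Aᵀ = 1) (a : F) (x : ι → F) :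
    (a • x ᵥ* A) ⬝ᵥ (a • x ᵥ* A) = a ^ 2 * (x ⬝ᵥ x) := by
  simp only [smul_dotProduct, dotProduct_smul, smul_eq_mul, vecMul_dotProduct_vecMul_self hA]
  ring

lemma exists_mul_transpose_eq_one_vecMul_eq (h2 : (2 : F) ≠ 0) {u v : ι → F} (hu : u ≠ 0)
    (hv : v ≠ 0) (huv : u ⬝ᵥ u = v ⬝ᵥ v) : ∃ A : Matrix ι ι F, A * Aᵀ = 1 ∧ u ᵥ* A = v := by
  by_cases hsub : (u - v) ⬝ᵥ (u - v) = 0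
  swap
  · exact ⟨_, dotReflection_mul_transpose hsub, vecMul_dotReflection_sub huv hsub⟩
  by_cases hadd : (u + v) ⬝ᵥ (u + v) = 0
  swap
  · rw [← sub_neg_eq_add] at hadd
    refine ⟨-dotReflection (u - -v), by simpa using dotReflection_mul_transpose hadd, ?_⟩
    rw [vecMul_neg, vecMul_dotReflection_sub (by simpa using huv) hadd, neg_neg]
  rw [sub_dotProduct_sub_self, ← huv] at hsub
  rw [add_dotProduct_add_self, ← huv] at hadd
  have hu0 : u ⬝ᵥ u = 0 := by
    have : 2 * (2 * (u ⬝ᵥ u)) = 0 := by linear_combination hsub + hadd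
    simpa [h2] using this
  have huv0 : u ⬝ᵥ v = 0 := by
    have : 2 * (2 * (u ⬝ᵥ v)) = 0 := by linear_combination hadd - hsub
    simpa [h2] using this
  obtain ⟨m, hm0, hum, hvm⟩ := exists_isotropic_dotProduct_ne_zero h2 hu hv hu0 huv0
  have hum' : (u - m) ⬝ᵥ (u - m) ≠ 0 := by
    rw [sub_dotProduct_sub_self, hu0, hm0]
    simpa [h2] using hum
  have hmv : (m - v) ⬝ᵥ (m - v) ≠ 0 := by
    rw [sub_dotProduct_sub_self, ← huv, hu0, hm0, dotProduct_comm m v]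
    simpa [h2] using hvm
  refine ⟨dotReflection (u - m) * dotReflection (m - v), ?_, ?_⟩
  · exact mul_mul_transpose_eq_one (dotReflection_mul_transpose hum')
      (dotReflection_mul_transpose hmv)
  · rw [← vecMul_vecMul, vecMul_dotReflection_sub (by rw [hu0, hm0]) hum',
      vecMul_dotReflection_sub (by rw [hm0, ← huv, hu0]) hmv]

lemma exists_smul_vecMul_eq (h2 : (2 : F) ≠ 0) {x y : ι → F} (hx : x ≠ 0) (hy : y ≠ 0) {a : F}
    (ha : a ≠ 0) (hxy : a ^ 2 * (x ⬝ᵥ x) = y ⬝ᵥ y) :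
    ∃ A : Matrix ι ι F, A * Aᵀ = 1 ∧ y = a • x ᵥ* A := by
  obtain ⟨A, hA, hAy⟩ := exists_mul_transpose_eq_one_vecMul_eq h2 (smul_ne_zero ha hx) hy
    (by rw [smul_dotProduct, dotProduct_smul, smul_eq_mul, smul_eq_mul, ← hxy]; ring)
  exact ⟨A, hA, by rw [← hAy, smul_vecMul]⟩

end Orthogonal

section SquareClasses

variable {F : Type*} [Field F]

lemma isSquare_sq_mul_iff {a : F} (ha : a ≠ 0) (c : F) : IsSquare (a ^ 2 * c) ↔ IsSquare c := by
  refine ⟨fun h => ?_, (IsSquare.sq a).mul⟩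
  simpa [← mul_assoc, ← mul_pow, ha] using (IsSquare.sq a⁻¹).mul h

lemma two_ne_zero_of_odd_card [Fintype F] (hF : Odd (Fintype.card F)) : (2 : F) ≠ 0 :=
  Ring.two_ne_zero fun hchar =>
    Nat.not_even_iff_odd.mpr hF (Nat.even_iff.mpr (FiniteField.even_card_of_char_two hchar))

lemma exists_sq_mul_eq_of_isSquare_iff [Fintype F] {c d : F} (hc : c ≠ 0) (hd : d ≠ 0)
    (h : IsSquare c ↔ IsSquare d) : ∃ a, a ≠ 0 ∧ a ^ 2 * c = d := by
  classical
  have hχ : quadraticChar F c = quadraticChar F d := by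
    by_cases hsq : IsSquare c
    · rw [(quadraticChar_one_iff_isSquare hc).mpr hsq,
        (quadraticChar_one_iff_isSquare hd).mpr (h.mp hsq)]
    · rw [quadraticChar_neg_one_iff_not_isSquare.mpr hsq,
        quadraticChar_neg_one_iff_not_isSquare.mpr (h.not.mp hsq)]
  obtain ⟨r, hr⟩ : IsSquare (c * d) := by
    rw [← quadraticChar_one_iff_isSquare (mul_ne_zero hc hd), map_mul, ← hχ, ← sq,
      quadraticChar_sq_one hc]
  refine ⟨r / c, fun h0 => mul_ne_zero hc hd (by simp_all), ?_⟩
  rw [div_pow, sq r, ← hr]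
  field_simp

end SquareClasses

theorem M_orbits_general
    (p h n : ℕ) (hodd : Odd p)
    (q : ℕ) (hq : q = p ^ h)
    (F : Type) [Field F] [Fintype F] (hF : Fintype.card F = q) :
    (∀ (a : F) (A : Matrix (Fin n) (Fin n) F), a ≠ 0 → A * A.transpose = 1 →
      ∀ x : Fin n → F,
        (((∑ i, x i ^ 2) = 0 ∧ x ≠ 0) →
          ((∑ i, (a • Matrix.vecMul x A) i ^ 2) = 0 ∧ a • Matrix.vecMul x A ≠ 0)) ∧
        ((IsSquare (∑ i, x i ^ 2) ∧ (∑ i, x i ^ 2) ≠ 0) →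
          (IsSquare (∑ i, (a • Matrix.vecMul x A) i ^ 2) ∧
            (∑ i, (a • Matrix.vecMul x A) i ^ 2) ≠ 0)) ∧
        (¬ IsSquare (∑ i, x i ^ 2) →
          ¬ IsSquare (∑ i, (a • Matrix.vecMul x A) i ^ 2)))
    ∧
    (∀ x y : Fin n → F,
      ((((∑ i, x i ^ 2) = 0 ∧ x ≠ 0) ∧ ((∑ i, y i ^ 2) = 0 ∧ y ≠ 0)) ∨
       ((IsSquare (∑ i, x i ^ 2) ∧ (∑ i, x i ^ 2) ≠ 0) ∧
        (IsSquare (∑ i, y i ^ 2) ∧ (∑ i, y i ^ 2) ≠ 0)) ∨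
       (¬ IsSquare (∑ i, x i ^ 2) ∧ ¬ IsSquare (∑ i, y i ^ 2))) →
      ∃ (a : F) (A : Matrix (Fin n) (Fin n) F),
        a ≠ 0 ∧ A * A.transpose = 1 ∧ y = a • Matrix.vecMul x A) := by
  have h2 : (2 : F) ≠ 0 := two_ne_zero_of_odd_card (by rw [hF, hq]; exact hodd.pow)
  simp only [sum_sq_eq_dotProduct_self]
  refine ⟨fun a A ha hA x => ?_, fun x y hxy => ?_⟩
  · rw [smul_vecMul_dotProduct_self hA, isSquare_sq_mul_iff ha]
    exact ⟨fun ⟨hx0, hx⟩ => ⟨by rw [hx0, mul_zero],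
        smul_ne_zero ha (vecMul_ne_zero_of_mul_transpose_eq_one hA hx)⟩,
      fun ⟨hsq, hx0⟩ => ⟨hsq, mul_ne_zero (pow_ne_zero 2 ha) hx0⟩, id⟩
  · obtain ⟨hx, hy, a, ha, hxy⟩ :
        x ≠ 0 ∧ y ≠ 0 ∧ ∃ a : F, a ≠ 0 ∧ a ^ 2 * (x ⬝ᵥ x) = y ⬝ᵥ y := by
      rcases hxy with ⟨⟨hx0, hx⟩, hy0, hy⟩ | ⟨⟨hxs, hx0⟩, hys, hy0⟩ | ⟨hxs, hys⟩
      · exact ⟨hx, hy, 1, one_ne_zero, by rw [hx0, hy0, mul_zero]⟩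
      · exact ⟨ne_zero_of_dotProduct_self_ne_zero hx0, ne_zero_of_dotProduct_self_ne_zero hy0,
          exists_sq_mul_eq_of_isSquare_iff hx0 hy0 (iff_of_true hxs hys)⟩
      · have hx0 : x ⬝ᵥ x ≠ 0 := fun h0 => hxs (h0 ▸ IsSquare.zero)
        have hy0 : y ⬝ᵥ y ≠ 0 := fun h0 => hys (h0 ▸ IsSquare.zero)
        exact ⟨ne_zero_of_dotProduct_self_ne_zero hx0, ne_zero_of_dotProduct_self_ne_zero hy0,
          exists_sq_mul_eq_of_isSquare_iff hx0 hy0 (iff_of_false hxs hys)⟩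
    obtain ⟨A, hA, hAy⟩ := exists_smul_vecMul_eq h2 hx hy ha hxy
    exact ⟨a, A, ha, hA, hAy⟩

/-- Let `p` be an odd prime, `q = p^h`, `n ≥ 3`. The orbits of
the group `M = {x ↦ a·x·A : a ∈ 𝔽_q^×, A·Aᵀ = I}` on `𝔽_q^n` are exactly
`{0}`, `S_0`, `S_+`, `S_-`: each of `S_0`, `S_+`, `S_-` is invariant under
every such map, and any two points in the same one of these sets are related
by such a map. Here `Q(x) = ∑ x_i²`, `S_0 = {x ≠ 0 : Q(x) = 0}`,
`S_+ = {x : Q(x) a nonzero square}`, `S_- = {x : Q(x) not a square}`. -/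
theorem M_orbits
    (p h n : ℕ) (hp : p.Prime) (hodd : Odd p) (hn : 3 ≤ n)
    (q : ℕ) (hq : q = p ^ h)
    (F : Type) [Field F] [Fintype F] (hF : Fintype.card F = q) :
    (∀ (a : F) (A : Matrix (Fin n) (Fin n) F), a ≠ 0 → A * A.transpose = 1 →
      ∀ x : Fin n → F,
        (((∑ i, x i ^ 2) = 0 ∧ x ≠ 0) →
          ((∑ i, (a • Matrix.vecMul x A) i ^ 2) = 0 ∧ a • Matrix.vecMul x A ≠ 0)) ∧
        ((IsSquare (∑ i, x i ^ 2) ∧ (∑ i, x i ^ 2) ≠ 0) →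
          (IsSquare (∑ i, (a • Matrix.vecMul x A) i ^ 2) ∧
            (∑ i, (a • Matrix.vecMul x A) i ^ 2) ≠ 0)) ∧
        (¬ IsSquare (∑ i, x i ^ 2) →
          ¬ IsSquare (∑ i, (a • Matrix.vecMul x A) i ^ 2)))
    ∧
    (∀ x y : Fin n → F,
      ((((∑ i, x i ^ 2) = 0 ∧ x ≠ 0) ∧ ((∑ i, y i ^ 2) = 0 ∧ y ≠ 0)) ∨
       ((IsSquare (∑ i, x i ^ 2) ∧ (∑ i, x i ^ 2) ≠ 0) ∧
        (IsSquare (∑ i, y i ^ 2) ∧ (∑ i, y i ^ 2) ≠ 0)) ∨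
       (¬ IsSquare (∑ i, x i ^ 2) ∧ ¬ IsSquare (∑ i, y i ^ 2))) →
      ∃ (a : F) (A : Matrix (Fin n) (Fin n) F),
        a ≠ 0 ∧ A * A.transpose = 1 ∧ y = a • Matrix.vecMul x A) :=
  M_orbits_general p h n hodd q hq F hF
end

section
/- Let p be an odd prime, q = p^h, and n ≥ 3. The group EM of all transformations of 𝔽_q^n of the form x ↦ a·x·A + b, where a ∈ 𝔽_q^×, A ∈ GL(n,q) with A·Aᵀ = I, and b ∈ 𝔽_q^n, acts primitively on 𝔽_q^n (it is transitive and preserves no nontrivial proper partition of 𝔽_q^n into blocks). -/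
/-!
Transitivity comes from the translations. For primitivity, let `B` be a block containing two
distinct points and fix `x ∈ B`. Every element of `EM` fixing `x` and every translation by a
vector of `B - x` moves some point of `B` into `B`, hence maps `B` into itself; so
`S = {v | x + v ∈ B}` is a subspace invariant under the orthogonal group. If `d ∈ S` has
`dᵢ ≠ 0`, the reflection in the `i`-th coordinate sends `d` to `d - 2dᵢeᵢ`, so `eᵢ ∈ S` since
`2 ≠ 0`; the permutation matrices then give every `eⱼ ∈ S`, so `S` is everything and `B` is all
of `𝔽_q^n`.
-/

open Matrix Set

theorem two_ne_zero_of_card_eq_odd_pow {F : Type*} [Field F] [Fintype F] {p h : ℕ}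
    (hodd : Odd p) (hF : Fintype.card F = p ^ h) : (2 : F) ≠ 0 :=
  Ring.two_ne_zero fun hchar ↦ by
    have hcard := FiniteField.even_card_of_char_two hchar
    rw [hF, ← Nat.even_iff] at hcard
    exact Nat.not_even_iff_odd.mpr hodd.pow hcard

theorem Set.mapsTo_of_image_eq_or_disjoint {α : Type*} {f : α → α} {B : Set α}
    (hf : f '' B = B ∨ Disjoint (f '' B) B) {z : α} (hz : z ∈ B) (hfz : f z ∈ B) :
    MapsTo f B B := by
  rcases hf with h | h
  · exact (mapsTo_image f B).mono_right h.subset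
  · exact (Set.disjoint_left.mp h (mem_image_of_mem f hz) hfz).elim

section Orthogonal

variable {ι R : Type*} [Fintype ι] [DecidableEq ι] [CommRing R]

theorem permMatrix_mul_transpose (σ : Equiv.Perm ι) :
    σ.permMatrix R * (σ.permMatrix R)ᵀ = 1 := by
  rw [transpose_permMatrix, ← permMatrix_mul, inv_mul_cancel, permMatrix_one]

theorem single_vecMul_swap_permMatrix (i j : ι) (c : R) :
    Pi.single i c ᵥ* (Equiv.swap i j).permMatrix R = Pi.single j c := by
  rw [vecMul_permMatrix]
  ext k
  simp [Pi.single_apply, Equiv.swap_apply_eq_iff]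

theorem diagonal_update_neg_one_mul_transpose (i : ι) :
    diagonal (Function.update (1 : ι → R) i (-1)) *
      (diagonal (Function.update (1 : ι → R) i (-1)))ᵀ = 1 := by
  rw [diagonal_transpose, diagonal_mul_diagonal, ← diagonal_one]
  congr 1
  ext j
  by_cases hj : j = i <;> simp [hj]

theorem sub_vecMul_diagonal_update_neg_one (d : ι → R) (i : ι) :
    d - d ᵥ* diagonal (Function.update (1 : ι → R) i (-1)) = Pi.single i (2 * d i) := by
  ext j
  by_cases hj : j = i
  · subst hj; simp [vecMul_diagonal]; ring
  · simp [vecMul_diagonal, hj]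

end Orthogonal

section Field

variable {ι F : Type*} [Fintype ι] [DecidableEq ι] [Field F]

theorem Submodule.eq_top_of_forall_orthogonal_vecMul_mem (h2 : (2 : F) ≠ 0)
    {S : Submodule F (ι → F)} (hS : ∀ A : Matrix ι ι F, A * Aᵀ = 1 → ∀ v ∈ S, v ᵥ* A ∈ S)
    (hne : S ≠ ⊥) : S = ⊤ := by
  obtain ⟨d, hdS, hd0⟩ := S.exists_mem_ne_zero_of_ne_bot hne
  obtain ⟨i, hi⟩ := Function.ne_iff.mp hd0
  have hsi : Pi.single i (1 : F) ∈ S := by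
    have hrefl : Pi.single i (2 * d i) ∈ S := sub_vecMul_diagonal_update_neg_one d i ▸
      S.sub_mem hdS (hS _ (diagonal_update_neg_one_mul_transpose i) d hdS)
    have := S.smul_mem (2 * d i)⁻¹ hrefl
    rwa [← Pi.single_smul', smul_eq_mul, inv_mul_cancel₀ (mul_ne_zero h2 hi)] at this
  have hsj (j : ι) : Pi.single j (1 : F) ∈ S := single_vecMul_swap_permMatrix i j (1 : F) ▸
    hS _ (permMatrix_mul_transpose _) _ hsi
  rw [eq_top_iff, ← (Pi.basisFun F ι).span_eq, Submodule.span_le]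
  rintro _ ⟨j, rfl⟩
  simpa using hsj j

def IsEMBlock (B : Set (ι → F)) : Prop :=
  ∀ (a : F) (A : Matrix ι ι F) (b : ι → F), a ≠ 0 → A * Aᵀ = 1 →
    (fun x ↦ a • x ᵥ* A + b) '' B = B ∨ Disjoint ((fun x ↦ a • x ᵥ* A + b) '' B) B

namespace IsEMBlock

variable {B : Set (ι → F)}

theorem mem (hB : IsEMBlock B) {a : F} (A : Matrix ι ι F) (b : ι → F) (ha : a ≠ 0) (hA : A * Aᵀ = 1)
    {z : ι → F} (hz : z ∈ B) (hfz : a • z ᵥ* A + b ∈ B) {w : ι → F} (hw : w ∈ B) :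
    a • w ᵥ* A + b ∈ B :=
  Set.mapsTo_of_image_eq_or_disjoint (hB a A b ha hA) hz hfz hw

def submodule (hB : IsEMBlock B) {x : ι → F} (hx : x ∈ B) : Submodule F (ι → F) where
  carrier := {v | x + v ∈ B}
  add_mem' {u v} hu hv := by
    have := hB.mem 1 v one_ne_zero (by simp) hx (by simpa using hv) hu
    simpa [add_assoc] using this
  zero_mem' := by simpa using hx
  smul_mem' c v hv := by
    rcases eq_or_ne c 0 with rfl | hc
    · simpa using hx
    have := hB.mem 1 (x - c • x) hc (by simp) hx (by simpa using hx) hv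
    simp only [vecMul_one] at this
    show x + c • v ∈ B
    convert this using 1
    module

theorem mem_submodule {hB : IsEMBlock B} {x : ι → F} {hx : x ∈ B} {v : ι → F} :
    v ∈ hB.submodule hx ↔ x + v ∈ B :=
  Iff.rfl

theorem vecMul_mem_submodule (hB : IsEMBlock B) {x : ι → F} (hx : x ∈ B) {A : Matrix ι ι F}
    (hA : A * Aᵀ = 1) {v : ι → F} (hv : v ∈ hB.submodule hx) : v ᵥ* A ∈ hB.submodule hx := by
  have := hB.mem A (x - x ᵥ* A) one_ne_zero hA hx (by simpa using hx) hv
  rw [mem_submodule]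
  convert this using 1
  rw [one_smul, add_vecMul]
  abel

theorem subsingleton_or_eq_univ (h2 : (2 : F) ≠ 0) (hB : IsEMBlock B) :
    B.Subsingleton ∨ B = univ := by
  rw [or_iff_not_imp_left, Set.not_subsingleton_iff]
  rintro ⟨x, hx, y, hy, hxy⟩
  have hS : hB.submodule hx = ⊤ :=
    Submodule.eq_top_of_forall_orthogonal_vecMul_mem h2 (fun _ hA _ ↦ hB.vecMul_mem_submodule hx hA)
      ((Submodule.ne_bot_iff _).mpr ⟨y - x, by simpa [mem_submodule] using hy,
        sub_ne_zero.mpr hxy.symm⟩)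
  refine eq_univ_of_forall fun z ↦ ?_
  have hz : z - x ∈ hB.submodule hx := hS ▸ Submodule.mem_top
  simpa [mem_submodule] using hz

end IsEMBlock

end Field

theorem EM_primitive_general
    (p h n : ℕ) (hodd : Odd p)
    (q : ℕ) (hq : q = p ^ h)
    (F : Type) [Field F] [Fintype F] (hF : Fintype.card F = q) :
    (∀ x y : Fin n → F,
      ∃ (a : F) (A : Matrix (Fin n) (Fin n) F) (b : Fin n → F),
        a ≠ 0 ∧ A * A.transpose = 1 ∧ a • Matrix.vecMul x A + b = y)
    ∧
    (∀ B : Set (Fin n → F),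
      (∀ (a : F) (A : Matrix (Fin n) (Fin n) F) (b : Fin n → F),
        a ≠ 0 → A * A.transpose = 1 →
        ((fun x : Fin n → F => a • Matrix.vecMul x A + b) '' B = B ∨
          Disjoint ((fun x : Fin n → F => a • Matrix.vecMul x A + b) '' B) B)) →
      B.Subsingleton ∨ B = Set.univ) :=
  ⟨fun x y ↦ ⟨1, 1, y - x, one_ne_zero, by simp, by simp⟩,
    fun _ hB ↦ IsEMBlock.subsingleton_or_eq_univ (two_ne_zero_of_card_eq_odd_pow hodd (hq ▸ hF)) hB⟩

/-- Let `p` be an odd prime, `q = p^h`, `n ≥ 3`. The group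
`EM` of transformations `x ↦ a·x·A + b` (with `a ∈ 𝔽_q^×`, `A·Aᵀ = I`,
`b ∈ 𝔽_q^n`) acts primitively on `𝔽_q^n`: it is transitive, and any subset
`B ⊆ 𝔽_q^n` which is a block (every element of `EM` maps `B` either onto
itself or to a set disjoint from `B`) is a singleton-or-empty set or all of
`𝔽_q^n`. -/
theorem EM_primitive
    (p h n : ℕ) (hp : p.Prime) (hodd : Odd p) (hn : 3 ≤ n)
    (q : ℕ) (hq : q = p ^ h)
    (F : Type) [Field F] [Fintype F] (hF : Fintype.card F = q) :
    (∀ x y : Fin n → F,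
      ∃ (a : F) (A : Matrix (Fin n) (Fin n) F) (b : Fin n → F),
        a ≠ 0 ∧ A * A.transpose = 1 ∧ a • Matrix.vecMul x A + b = y)
    ∧
    (∀ B : Set (Fin n → F),
      (∀ (a : F) (A : Matrix (Fin n) (Fin n) F) (b : Fin n → F),
        a ≠ 0 → A * A.transpose = 1 →
        ((fun x : Fin n → F => a • Matrix.vecMul x A + b) '' B = B ∨
          Disjoint ((fun x : Fin n → F => a • Matrix.vecMul x A + b) '' B) B)) →
      B.Subsingleton ∨ B = Set.univ) :=
  EM_primitive_general p h n hodd q hq F hF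
end

section
/- Let p be an odd prime, q = p^h, and n ≥ 3. The set S_− = { x ∈ 𝔽_q^n : Σ_{i=1}^n x_i² is not a square in 𝔽_q } spans 𝔽_q^n as an 𝔽_q-vector space. -/
/-!
Every element of a finite field of odd order is a sum of two squares, so some nonsquare is
`b ^ 2 + c ^ 2`. For coordinates `i ≠ j`, the vectors `b eᵢ + c eⱼ` and `-c eᵢ + b eⱼ` then both
have nonsquare norm, and `b • (b eᵢ + c eⱼ) - c • (-c eᵢ + b eⱼ) = (b ^ 2 + c ^ 2) eᵢ` with
`b ^ 2 + c ^ 2 ≠ 0`, so every standard basis vector lies in the span.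
-/

open Polynomial in
theorem FiniteField.exists_sq_add_sq {F : Type*} [Field F] [Fintype F]
    (hF : Fintype.card F % 2 = 1) (x : F) : ∃ a b : F, a ^ 2 + b ^ 2 = x := by
  obtain ⟨a, b, hab⟩ := FiniteField.exists_root_sum_quadratic
    (f := (X : F[X]) ^ 2) (g := X ^ 2 - C x) (degree_X_pow 2)
    (degree_X_pow_sub_C two_pos x) hF
  refine ⟨a, b, sub_eq_zero.mp ?_⟩
  simpa only [eval_C, eval_X, eval_pow, eval_sub, ← add_sub_assoc] using hab

theorem FiniteField.exists_not_isSquare_sq_add_sq {F : Type*} [Field F] [Fintype F]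
    (hF : ringChar F ≠ 2) : ∃ b c : F, ¬IsSquare (b ^ 2 + c ^ 2) := by
  obtain ⟨a, ha⟩ := FiniteField.exists_nonsquare hF
  obtain ⟨b, c, rfl⟩ := FiniteField.exists_sq_add_sq (FiniteField.odd_card_of_char_ne_two hF) a
  exact ⟨b, c, ha⟩

theorem sum_sq_single_add_single {K ι : Type*} [Semiring K] [Fintype ι] [DecidableEq ι]
    {i j : ι} (hij : i ≠ j) (b c : K) :
    ∑ k, (Pi.single i b + Pi.single j c : ι → K) k ^ 2 = b ^ 2 + c ^ 2 := by
  rw [Fintype.sum_eq_add i j hij fun k hk => by simp [hk.1, hk.2]]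
  simp [hij, hij.symm]

section NonsquareSumSq

variable {K ι : Type*} [Field K] [Fintype ι] [DecidableEq ι]

theorem single_one_mem_span_not_isSquare_sum_sq {i j : ι} (hij : i ≠ j) {b c : K}
    (hbc : ¬IsSquare (b ^ 2 + c ^ 2)) :
    Pi.single i 1 ∈ Submodule.span K {x : ι → K | ¬IsSquare (∑ k, x k ^ 2)} := by
  set S := Submodule.span K {x : ι → K | ¬IsSquare (∑ k, x k ^ 2)}
  have hu : Pi.single i b + Pi.single j c ∈ S :=
    Submodule.subset_span <| by rwa [Set.mem_ofPred_eq, sum_sq_single_add_single hij]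
  have hv : Pi.single i (-c) + Pi.single j b ∈ S :=
    Submodule.subset_span <| by
      rwa [Set.mem_ofPred_eq, sum_sq_single_add_single hij, neg_sq, add_comm]
  have hne : b ^ 2 + c ^ 2 ≠ 0 := fun h => hbc (h ▸ IsSquare.zero)
  have hcomb : (b ^ 2 + c ^ 2)⁻¹ • (b • (Pi.single i b + Pi.single j c) -
      c • (Pi.single i (-c) + Pi.single j b)) = (Pi.single i 1 : ι → K) := by
    ext k
    rcases eq_or_ne k i with rfl | hki
    · simp [hij, hne, ← sq]
    · rcases eq_or_ne k j with rfl | hkj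
      · simp [hki, mul_comm]
      · simp [hki, hkj]
  exact hcomb ▸ S.smul_mem _ (S.sub_mem (S.smul_mem b hu) (S.smul_mem c hv))

theorem span_not_isSquare_sum_sq_eq_top [Nontrivial ι] {b c : K}
    (hbc : ¬IsSquare (b ^ 2 + c ^ 2)) :
    Submodule.span K {x : ι → K | ¬IsSquare (∑ k, x k ^ 2)} = ⊤ := by
  rw [eq_top_iff, ← (Pi.basisFun K ι).span_eq, Submodule.span_le, Set.range_subset_iff]
  intro i
  obtain ⟨j, hji⟩ := exists_ne i
  simpa using single_one_mem_span_not_isSquare_sum_sq hji.symm hbc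

end NonsquareSumSq

theorem Sminus_spans_general
    (p h n : ℕ) (hodd : Odd p) (hn : 3 ≤ n)
    (q : ℕ) (hq : q = p ^ h)
    (F : Type) [Field F] [Fintype F] (hF : Fintype.card F = q) :
    Submodule.span F {x : Fin n → F | ¬ IsSquare (∑ i, x i ^ 2)} = ⊤ := by
  have hcard : Fintype.card F % 2 = 1 := hF ▸ hq ▸ Nat.odd_iff.mp hodd.pow
  have hchar : ringChar F ≠ 2 := fun h2 => by
    have := FiniteField.even_card_of_char_two h2
    omega
  have : Nontrivial (Fin n) := Fin.nontrivial_iff_two_le.mpr (by omega)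
  obtain ⟨b, c, hbc⟩ := FiniteField.exists_not_isSquare_sq_add_sq hchar
  exact span_not_isSquare_sum_sq_eq_top hbc

/-- Let `p` be an odd prime, `q = p^h`, `n ≥ 3`. The set
`S_- = {x ∈ 𝔽_q^n : ∑ x_i² is not a square in 𝔽_q}` spans `𝔽_q^n` over
`𝔽_q`. -/
theorem Sminus_spans
    (p h n : ℕ) (hp : p.Prime) (hodd : Odd p) (hn : 3 ≤ n)
    (q : ℕ) (hq : q = p ^ h)
    (F : Type) [Field F] [Fintype F] (hF : Fintype.card F = q) :
    Submodule.span F {x : Fin n → F | ¬ IsSquare (∑ i, x i ^ 2)} = ⊤ :=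
  Sminus_spans_general p h n hodd hn q hq F hF
end

section
/- Let p be an odd prime, q = p^h, and n ≥ 1. Set ε = 0 if q ≡ 1 (mod 4) and ε = 1 if q ≡ 3 (mod 4). If n is odd, then |S_+| = (1/2)·( q^n − q^{n−1} + (−1)^{ε(n+3)/2}·q^{(n+1)/2} − (−1)^{ε(n−1)/2}·q^{(n−1)/2} ). If n is even, then |S_+| = (1/2)·( q^n − q^{n−1} − (−1)^{εn/2}·q^{n/2} + (−1)^{εn/2}·q^{(n−2)/2} ). -/
/-!
Let `N_n(c)` count the `x ∈ 𝔽_q^n` with `Q(x) = c` and let `χ` be the quadratic character.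
A Jacobi sum gives `N_2(s) = q + χ(-1) ν(s)`, and splitting off two coordinates then yields
`N_{n+2}(c) = q^{n+1} + χ(-1) (q N_n(c) - q^n)`, whence `N_{2k+1}(c) = q^{2k} + (χ(-1) q)^k χ(c)`
and `N_{2k+2}(c) = q^{2k+1} + χ(-1)^{k+1} q^k ν(c)`. Since `χ(c)² + χ(c)` is twice the indicator
of the nonzero squares, `2 |S_+| = ∑_c (χ(c)² + χ(c)) N_n(c)`, which is evaluated using `χ³ = χ`,
`∑ χ = 0`, `∑ χ² = q - 1`; finally `χ(-1) = (-1)^ε`.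
-/

open Finset

section SumOfSquares

variable {F : Type*} [Field F] [Fintype F] [DecidableEq F]

def sqSumCount (n : ℕ) (c : F) : ℕ := #{x : Fin n → F | ∑ i, x i ^ 2 = c}

lemma sum_comp_sum_sq {M : Type*} [AddCommMonoid M] (n : ℕ) (φ : F → M) :
    ∑ x : Fin n → F, φ (∑ i, x i ^ 2) = ∑ c, sqSumCount n c • φ c := by
  rw [← sum_fiberwise' univ (fun x : Fin n → F => ∑ i, x i ^ 2) φ]
  simp only [sum_const, sqSumCount]

lemma sum_sqSumCount (n : ℕ) : ∑ c : F, sqSumCount n c = Fintype.card F ^ n := by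
  have h := sum_comp_sum_sq n (fun _ : F => 1)
  simp only [smul_eq_mul, mul_one, sum_const, card_univ, Fintype.card_fun, Fintype.card_fin] at h
  exact h.symm

lemma sqSumCount_add (m n : ℕ) (c : F) :
    sqSumCount (m + n) c = ∑ s, sqSumCount m s * sqSumCount n (c - s) := by
  have split : sqSumCount (m + n) c
      = ∑ x : Fin m → F, #{y : Fin n → F | ∑ i, y i ^ 2 = c - ∑ i, x i ^ 2} := by
    rw [sqSumCount, card_filter, ← (Fin.appendEquiv m n).sum_comp, Fintype.sum_prod_type]
    refine sum_congr rfl fun x _ => ?_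
    rw [card_filter]
    refine sum_congr rfl fun y _ => ?_
    simp [Fin.sum_univ_add, eq_sub_iff_add_eq']
  rw [split, sum_comp_sum_sq m (fun s => #{y : Fin n → F | ∑ i, y i ^ 2 = c - s})]
  rfl

lemma sum_sqSumCount_sub (n : ℕ) (c : F) :
    ∑ s : F, sqSumCount n (c - s) = Fintype.card F ^ n := by
  rw [← sum_sqSumCount n]
  exact Fintype.sum_equiv (Equiv.subLeft c) _ _ fun _ => rfl

/-- The function `ν` of Lidl–Niederreiter, *Finite Fields*, Ch. 6. -/
def nu (c : F) : ℤ := if c = 0 then Fintype.card F - 1 else -1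

lemma sum_quadraticChar_sq : ∑ a : F, quadraticChar F a ^ 2 = Fintype.card F - 1 := by
  have h := MulChar.sum_one_eq_card_units (R := F) (R' := ℤ)
  rw [← (quadraticChar_isQuadratic F).sq_eq_one, Fintype.card_units, Nat.cast_sub
    Fintype.card_pos] at h
  simpa [MulChar.pow_apply'] using h

lemma sqSumCount_one (hF : ringChar F ≠ 2) (c : F) :
    (sqSumCount 1 c : ℤ) = quadraticChar F c + 1 := by
  rw [← quadraticChar_card_sqrts hF c, Set.toFinset_ofPred, sqSumCount,
    ← card_map (Equiv.funUnique (Fin 1) F).toEmbedding, map_filter]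
  simp [Function.comp_def]

lemma sum_quadraticChar_mul_quadraticChar_sub (hF : ringChar F ≠ 2) (c : F) :
    ∑ s, quadraticChar F s * quadraticChar F (c - s)
      = quadraticChar F (-1) * nu c := by
  unfold nu
  split_ifs with hc
  · have h (s : F) : quadraticChar F s * quadraticChar F (0 - s)
        = quadraticChar F (-1) * quadraticChar F s ^ 2 := by
      rw [zero_sub, neg_eq_neg_one_mul s, map_mul]; ring
    rw [hc, Fintype.sum_congr _ _ h, ← mul_sum, sum_quadraticChar_sq]
  · have h (t : F) : quadraticChar F (c * t) * quadraticChar F (c - c * t)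
        = quadraticChar F t * quadraticChar F (1 - t) := by
      rw [← mul_one_sub, map_mul, map_mul]
      linear_combination (quadraticChar F t * quadraticChar F (1 - t)) * quadraticChar_sq_one hc
    have hJ := jacobiSum_nontrivial_inv (quadraticChar_ne_one hF)
    rw [(quadraticChar_isQuadratic F).inv, jacobiSum, ← Fintype.sum_congr _ _ h] at hJ
    rw [← Fintype.sum_bijective _ (mulLeft_bijective₀ c hc) _ _ fun _ => rfl, hJ]
    ring

lemma sum_quadraticChar_sub (hF : ringChar F ≠ 2) (c : F) :
    ∑ s, quadraticChar F (c - s) = 0 := by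
  rw [Fintype.sum_equiv (Equiv.subLeft c) (fun s => quadraticChar F (c - s)) _ fun _ => rfl,
    quadraticChar_sum_zero hF]

lemma sqSumCount_two (hF : ringChar F ≠ 2) (c : F) :
    (sqSumCount 2 c : ℤ) = Fintype.card F + quadraticChar F (-1) * nu c := by
  have h (s : F) : ((sqSumCount 1 s * sqSumCount 1 (c - s) : ℕ) : ℤ)
      = quadraticChar F s * quadraticChar F (c - s) + quadraticChar F s
        + quadraticChar F (c - s) + 1 := by
    push_cast
    rw [sqSumCount_one hF, sqSumCount_one hF]
    ring
  rw [sqSumCount_add 1 1, Nat.cast_sum, Fintype.sum_congr _ _ h]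
  simp only [sum_add_distrib, sum_quadraticChar_mul_quadraticChar_sub hF,
    quadraticChar_sum_zero hF, sum_quadraticChar_sub hF, sum_const, card_univ, nsmul_eq_mul,
    mul_one]
  ring

lemma sqSumCount_add_two (hF : ringChar F ≠ 2) (n : ℕ) (c : F) :
    (sqSumCount (n + 2) c : ℤ) = (Fintype.card F : ℤ) ^ (n + 1)
      + quadraticChar F (-1) * (Fintype.card F * sqSumCount n c - (Fintype.card F : ℤ) ^ n) := by
  have h (s : F) : ((sqSumCount 2 s * sqSumCount n (c - s) : ℕ) : ℤ)
      = (Fintype.card F - quadraticChar F (-1)) * sqSumCount n (c - s)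
        + if s = 0 then quadraticChar F (-1) * Fintype.card F * sqSumCount n c else 0 := by
    rw [Nat.cast_mul, sqSumCount_two hF, nu]
    rcases eq_or_ne s 0 with rfl | hs
    · simp only [if_pos, sub_zero]
      ring
    · simp only [if_neg hs]
      ring
  rw [add_comm, sqSumCount_add 2 n, Nat.cast_sum, Fintype.sum_congr _ _ h, sum_add_distrib,
    ← mul_sum, sum_ite_eq', if_pos (mem_univ _), ← Nat.cast_sum, sum_sqSumCount_sub]
  push_cast
  ring

lemma sqSumCount_odd (hF : ringChar F ≠ 2) (k : ℕ) (c : F) :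
    (sqSumCount (2 * k + 1) c : ℤ) = (Fintype.card F : ℤ) ^ (2 * k)
      + (quadraticChar F (-1) * Fintype.card F) ^ k * quadraticChar F c := by
  induction k with
  | zero => rw [sqSumCount_one hF]; ring
  | succ k ih =>
    rw [show 2 * (k + 1) + 1 = 2 * k + 1 + 2 by ring, sqSumCount_add_two hF, ih]
    ring

lemma sqSumCount_even (hF : ringChar F ≠ 2) (k : ℕ) (c : F) :
    (sqSumCount (2 * k + 2) c : ℤ) = (Fintype.card F : ℤ) ^ (2 * k + 1)
      + quadraticChar F (-1) ^ (k + 1) * (Fintype.card F : ℤ) ^ k * nu c := by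
  induction k with
  | zero => rw [sqSumCount_two hF]; ring
  | succ k ih =>
    rw [show 2 * (k + 1) + 2 = 2 * k + 2 + 2 by ring, sqSumCount_add_two hF, ih]
    ring

lemma quadraticChar_sq_add_self (a : F) :
    quadraticChar F a ^ 2 + quadraticChar F a = if IsSquare a ∧ a ≠ 0 then 2 else 0 := by
  rcases eq_or_ne a 0 with rfl | ha
  · simp
  by_cases hsq : IsSquare a
  · rw [(quadraticChar_one_iff_isSquare ha).mpr hsq, if_pos ⟨hsq, ha⟩]
    norm_num
  · rw [quadraticChar_neg_one_iff_not_isSquare.mpr hsq, if_neg fun h => hsq h.1]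
    norm_num

lemma two_mul_ncard_isSquare_ne_zero_eq_sum {X : Type*} [Fintype X] (f : X → F) :
    2 * ({x | IsSquare (f x) ∧ f x ≠ 0}.ncard : ℤ)
      = ∑ x, (quadraticChar F (f x) ^ 2 + quadraticChar F (f x)) := by
  simp only [quadraticChar_sq_add_self, sum_ite, sum_const,
    Set.ncard_eq_toFinset_card', Set.toFinset_ofPred, nsmul_eq_mul]
  ring

lemma two_mul_ncard_eq_sum_sqSumCount (n : ℕ) :
    2 * ({x : Fin n → F | IsSquare (∑ i, x i ^ 2) ∧ ∑ i, x i ^ 2 ≠ 0}.ncard : ℤ)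
      = ∑ c, (quadraticChar F c ^ 2 + quadraticChar F c) * sqSumCount n c := by
  rw [two_mul_ncard_isSquare_ne_zero_eq_sum,
    sum_comp_sum_sq n fun c => quadraticChar F c ^ 2 + quadraticChar F c]
  simp only [nsmul_eq_mul, mul_comm]

lemma quadraticChar_neg_one_eq_neg_one_pow (hF : ringChar F ≠ 2) :
    quadraticChar F (-1) = (-1) ^ (if Fintype.card F % 4 = 1 then 0 else 1) := by
  have hodd := FiniteField.odd_card_of_char_ne_two hF
  rw [quadraticChar_neg_one hF]
  split_ifs with h4
  · exact ZMod.χ₄_nat_one_mod_four h4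
  · exact ZMod.χ₄_nat_three_mod_four (by omega)

lemma sum_quadraticChar_sq_add_self (hF : ringChar F ≠ 2) :
    ∑ c : F, (quadraticChar F c ^ 2 + quadraticChar F c) = Fintype.card F - 1 := by
  rw [sum_add_distrib, sum_quadraticChar_sq, quadraticChar_sum_zero hF, add_zero]

lemma sum_quadraticChar_sq_add_self_mul (hF : ringChar F ≠ 2) (a b : ℤ) :
    ∑ c : F, (quadraticChar F c ^ 2 + quadraticChar F c) * (a + b * quadraticChar F c)
      = (a + b) * (Fintype.card F - 1) := by
  have h (c : F) : (quadraticChar F c ^ 2 + quadraticChar F c) * (a + b * quadraticChar F c)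
      = (a + b) * (quadraticChar F c ^ 2 + quadraticChar F c) := by
    rcases eq_or_ne c 0 with rfl | hc
    · simp
    · linear_combination b * quadraticChar F c * quadraticChar_sq_one hc
  rw [Fintype.sum_congr _ _ h, ← mul_sum, sum_quadraticChar_sq_add_self hF]

lemma sum_quadraticChar_sq_add_self_mul_nu (hF : ringChar F ≠ 2) (a b : ℤ) :
    ∑ c : F, (quadraticChar F c ^ 2 + quadraticChar F c) * (a + b * nu c)
      = (a - b) * (Fintype.card F - 1) := by
  have h (c : F) : (quadraticChar F c ^ 2 + quadraticChar F c) * (a + b * nu c)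
      = (a - b) * (quadraticChar F c ^ 2 + quadraticChar F c) := by
    rcases eq_or_ne c 0 with rfl | hc
    · simp
    · rw [nu, if_neg hc]
      ring
  rw [Fintype.sum_congr _ _ h, ← mul_sum, sum_quadraticChar_sq_add_self hF]

lemma two_mul_ncard_sum_sq_odd (hF : ringChar F ≠ 2) (k : ℕ) :
    2 * ({x : Fin (2 * k + 1) → F | IsSquare (∑ i, x i ^ 2) ∧ ∑ i, x i ^ 2 ≠ 0}.ncard : ℤ)
      = ((Fintype.card F : ℤ) ^ (2 * k) + (quadraticChar F (-1) * Fintype.card F) ^ k)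
        * (Fintype.card F - 1) := by
  simp only [two_mul_ncard_eq_sum_sqSumCount, sqSumCount_odd hF,
    sum_quadraticChar_sq_add_self_mul hF]

lemma two_mul_ncard_sum_sq_even (hF : ringChar F ≠ 2) (k : ℕ) :
    2 * ({x : Fin (2 * k + 2) → F | IsSquare (∑ i, x i ^ 2) ∧ ∑ i, x i ^ 2 ≠ 0}.ncard : ℤ)
      = ((Fintype.card F : ℤ) ^ (2 * k + 1)
          - quadraticChar F (-1) ^ (k + 1) * Fintype.card F ^ k) * (Fintype.card F - 1) := by
  simp only [two_mul_ncard_eq_sum_sqSumCount, sqSumCount_even hF,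
    sum_quadraticChar_sq_add_self_mul_nu hF]

end SumOfSquares

theorem card_Splus_general
    (p h n : ℕ) (hodd : Odd p) (hn : 1 ≤ n)
    (q : ℕ) (hq : q = p ^ h)
    (F : Type) [Field F] [Fintype F] (hF : Fintype.card F = q)
    (ε : ℕ) (hε : ε = if q % 4 = 1 then 0 else 1) :
    (Odd n →
      (2 * ({x : Fin n → F | IsSquare (∑ i, x i ^ 2) ∧ (∑ i, x i ^ 2) ≠ 0}.ncard : ℤ) =
        (q : ℤ) ^ n - (q : ℤ) ^ (n - 1)
          + (-1 : ℤ) ^ (ε * ((n + 3) / 2)) * (q : ℤ) ^ ((n + 1) / 2)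
          - (-1 : ℤ) ^ (ε * ((n - 1) / 2)) * (q : ℤ) ^ ((n - 1) / 2))) ∧
    (Even n →
      (2 * ({x : Fin n → F | IsSquare (∑ i, x i ^ 2) ∧ (∑ i, x i ^ 2) ≠ 0}.ncard : ℤ) =
        (q : ℤ) ^ n - (q : ℤ) ^ (n - 1)
          - (-1 : ℤ) ^ (ε * (n / 2)) * (q : ℤ) ^ (n / 2)
          + (-1 : ℤ) ^ (ε * (n / 2)) * (q : ℤ) ^ ((n - 2) / 2))) := by
  classical
  have hF2 : ringChar F ≠ 2 := fun h2 => by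
    have h2q := FiniteField.even_card_iff_char_two.mp h2
    rw [hF, hq, ← Nat.even_iff] at h2q
    exact Nat.not_even_iff_odd.mpr hodd.pow h2q
  have hσ : quadraticChar F (-1) = (-1) ^ ε := by
    rw [hε, ← hF]
    exact quadraticChar_neg_one_eq_neg_one_pow hF2
  have hσ2 : quadraticChar F (-1) ^ 2 = 1 := by
    rw [hσ, ← pow_mul, mul_comm, pow_mul, neg_one_sq, one_pow]
  simp only [pow_mul (-1 : ℤ) ε, ← hσ]
  subst hF
  refine ⟨fun ⟨k, hk⟩ => ?_, fun ⟨m, hm⟩ => ?_⟩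
  · subst hk
    rw [two_mul_ncard_sum_sq_odd hF2, show (2 * k + 1 + 3) / 2 = k + 2 by omega,
      show (2 * k + 1 + 1) / 2 = k + 1 by omega, show (2 * k + 1 - 1) / 2 = k by omega,
      show 2 * k + 1 - 1 = 2 * k by omega]
    linear_combination (-(quadraticChar F (-1)) ^ k * (Fintype.card F : ℤ) ^ (k + 1)) * hσ2
  · obtain ⟨k, rfl⟩ : ∃ k, n = 2 * k + 2 := ⟨m - 1, by omega⟩
    rw [two_mul_ncard_sum_sq_even hF2, show (2 * k + 2) / 2 = k + 1 by omega,
      show (2 * k + 2 - 2) / 2 = k by omega, show 2 * k + 2 - 1 = 2 * k + 1 by omega]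
    ring

/-- Let `p` be an odd prime, `q = p^h`, `n ≥ 1`, and `ε = 0`
if `q ≡ 1 (mod 4)`, `ε = 1` if `q ≡ 3 (mod 4)`. If `n` is odd then
`|S_+| = ½ (q^n - q^{n-1} + (-1)^{ε(n+3)/2} q^{(n+1)/2} - (-1)^{ε(n-1)/2} q^{(n-1)/2})`;
if `n` is even then
`|S_+| = ½ (q^n - q^{n-1} - (-1)^{εn/2} q^{n/2} + (-1)^{εn/2} q^{(n-2)/2})`. -/
theorem card_Splus
    (p h n : ℕ) (hp : p.Prime) (hodd : Odd p) (hn : 1 ≤ n)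
    (q : ℕ) (hq : q = p ^ h)
    (F : Type) [Field F] [Fintype F] (hF : Fintype.card F = q)
    (ε : ℕ) (hε : ε = if q % 4 = 1 then 0 else 1) :
    (Odd n →
      (2 * ({x : Fin n → F | IsSquare (∑ i, x i ^ 2) ∧ (∑ i, x i ^ 2) ≠ 0}.ncard : ℤ) =
        (q : ℤ) ^ n - (q : ℤ) ^ (n - 1)
          + (-1 : ℤ) ^ (ε * ((n + 3) / 2)) * (q : ℤ) ^ ((n + 1) / 2)
          - (-1 : ℤ) ^ (ε * ((n - 1) / 2)) * (q : ℤ) ^ ((n - 1) / 2))) ∧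
    (Even n →
      (2 * ({x : Fin n → F | IsSquare (∑ i, x i ^ 2) ∧ (∑ i, x i ^ 2) ≠ 0}.ncard : ℤ) =
        (q : ℤ) ^ n - (q : ℤ) ^ (n - 1)
          - (-1 : ℤ) ^ (ε * (n / 2)) * (q : ℤ) ^ (n / 2)
          + (-1 : ℤ) ^ (ε * (n / 2)) * (q : ℤ) ^ ((n - 2) / 2))) :=
  card_Splus_general p h n hodd hn q hq F hF ε hε
end
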